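/- Fix λ ∈ (0,1). Suppose the null p-values are superuniform, p_j is independent of the remaining coordinates p_{-j} for each j ∈ H0, and the filter F is simple. Then the Focused Storey BH procedure at level q controls the generalized false discovery rate: FDR_F = E[FDP(U*)] ≤ q. -/

import Mathlib

/-!
Write `U*` for the output and split `FDP(U*) = ∑_{j ∈ H₀} U*_j / ‖U*‖`. Fix a null `j` and freeze
the other p-values. By simplicity of the filter, as long as `j` keeps positive weight the total
weight `‖U*‖ = V` does not depend on `p_j`; and since then `p_j ≤ t* ≤ λ`, Storey's estimate is
`m̂₀ = (1 + C)/(1 - λ)` with `C = #{i ≠ j : p_i > λ}`, so the threshold condition forces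
`p_j ≤ t* ≤ c := q V (1 - λ)/(1 + C)`. Hence, by superuniformity,
`E[U*_j/‖U*‖ | p_{-j}] ≤ P(p_j ≤ c)/V ≤ q (1 - λ)/(1 + C)`. Independence trades the factor
`1 - λ ≤ P(p_j > λ)` for the indicator of `p_j > λ`, and `C` may be replaced by the number `D_j`
of other nulls above `λ`. Finally `∑_{j ∈ H₀} 1{p_j > λ}/(1 + D_j) ≤ 1` pointwise.
-/

open MeasureTheory Finset

/-- Total prioritization weight of a prioritization vector. -/
noncomputable def normU {m : ℕ} (U : Fin m → ℝ) : ℝ := ∑ j, U j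

/-- Threshold rejection set `R(t,p) = {j : p_j ≤ t}`. -/
noncomputable def Rset {m : ℕ} (t : ℝ) (p : Fin m → ℝ) : Finset (Fin m) :=
  Finset.univ.filter (fun j => p j ≤ t)

/-- Focused BH FDP estimate `m·t / ‖F(R(t,p),p)‖` (with `x/0 = 0`). -/
noncomputable def FDPhat {m : ℕ} (F : Finset (Fin m) → (Fin m → ℝ) → (Fin m → ℝ))
    (p : Fin m → ℝ) (t : ℝ) : ℝ :=
  (m : ℝ) * t / normU (F (Rset t p) p)

/-- The Focused BH threshold: the largest `t ∈ {0, p_1, ..., p_m}` with `FDPhat(t) ≤ q`. -/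
noncomputable def tstar {m : ℕ} (F : Finset (Fin m) → (Fin m → ℝ) → (Fin m → ℝ))
    (q : ℝ) (p : Fin m → ℝ) : ℝ :=
  sSup {t : ℝ | (t = 0 ∨ ∃ j, t = p j) ∧ FDPhat F p t ≤ q}

/-- Generalized FDP of a prioritization vector (with `0/0 = 0`). -/
noncomputable def genFDP {m : ℕ} (H0 : Finset (Fin m)) (U : Fin m → ℝ) : ℝ :=
  (∑ j ∈ H0, U j) / (∑ j, U j)

/-- A filter outputs prioritization scores in `[0,1]`, vanishing outside the rejection set. -/
def IsFilter {m : ℕ} (F : Finset (Fin m) → (Fin m → ℝ) → (Fin m → ℝ)) : Prop :=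
  ∀ (R : Finset (Fin m)) (x : Fin m → ℝ) (j : Fin m),
    (j ∉ R → F R x j = 0) ∧ F R x j ∈ Set.Icc (0 : ℝ) 1

/-- Null p-values are superuniform. -/
def Superuniform {Ω : Type*} [MeasurableSpace Ω] (μ : Measure Ω) {m : ℕ}
    (p : Ω → Fin m → ℝ) (H0 : Finset (Fin m)) : Prop :=
  ∀ j ∈ H0, ∀ t ∈ Set.Icc (0 : ℝ) 1, μ {ω | p ω j ≤ t} ≤ ENNReal.ofReal t

/-- Storey's null-proportion estimate `(1 + #{j : p_j > λ})/(1-λ)`. -/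
noncomputable def m0hat {m : ℕ} (lam : ℝ) (p : Fin m → ℝ) : ℝ :=
  (1 + ((Finset.univ.filter (fun j : Fin m => lam < p j)).card : ℝ)) / (1 - lam)

/-- The Focused Storey BH FDP estimate `m0hat^λ(p)·t / ‖F(R(t,p),p)‖` (with `x/0 = 0`). -/
noncomputable def FDPhatStorey {m : ℕ} (F : Finset (Fin m) → (Fin m → ℝ) → (Fin m → ℝ))
    (lam : ℝ) (p : Fin m → ℝ) (t : ℝ) : ℝ :=
  m0hat lam p * t / normU (F (Rset t p) p)

/-- The Focused Storey BH threshold: the largest `t ∈ {0, p_1, ..., p_m} ∩ [0,λ]` with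
`FDPhat^Storey(t) ≤ q`. -/
noncomputable def tstarStorey {m : ℕ} (F : Finset (Fin m) → (Fin m → ℝ) → (Fin m → ℝ))
    (lam q : ℝ) (p : Fin m → ℝ) : ℝ :=
  sSup {t : ℝ | (t = 0 ∨ ∃ j, t = p j) ∧ t ≤ lam ∧ FDPhatStorey F lam p t ≤ q}

/-- A filter is simple: if `p1, p2` differ only in coordinate `j` and `j` can receive a
positive prioritization score under both, then the total weight `‖F(R,·)‖` agrees on `p1, p2`
for every rejection set containing `j`. -/
def SimpleFilter {m : ℕ} (F : Finset (Fin m) → (Fin m → ℝ) → (Fin m → ℝ)) : Prop :=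
  ∀ (j : Fin m) (p1 p2 : Fin m → ℝ), (∀ i, i ≠ j → p1 i = p2 i) →
    (∃ R10 : Finset (Fin m), 0 < F R10 p1 j) →
    (∃ R20 : Finset (Fin m), 0 < F R20 p2 j) →
    ∀ R : Finset (Fin m), j ∈ R → normU (F R p1) = normU (F R p2)

open ProbabilityTheory
open Function (update update_self update_of_ne update_eq_self)

section Threshold

variable {m : ℕ} {F : Finset (Fin m) → (Fin m → ℝ) → (Fin m → ℝ)} {lam q : ℝ}
  {x y : Fin m → ℝ} {j : Fin m}

lemma mem_Rset {t : ℝ} {i : Fin m} : i ∈ Rset t x ↔ x i ≤ t := by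
  simp [Rset]

lemma Rset_mono {s t : ℝ} (hst : s ≤ t) (x : Fin m → ℝ) : Rset s x ⊆ Rset t x :=
  fun _ hi => mem_Rset.2 ((mem_Rset.1 hi).trans hst)

lemma Rset_eq_of_agree (hxy : ∀ i, i ≠ j → x i = y i) {t : ℝ} (hx : x j ≤ t)
    (hy : y j ≤ t) : Rset t x = Rset t y := by
  ext i
  simp only [mem_Rset]
  by_cases hij : i = j
  · subst hij
    simp [hx, hy]
  · rw [hxy i hij]

lemma exists_candidate_Rset_eq (x : Fin m → ℝ) {t : ℝ} (ht : 0 ≤ t) :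
    ∃ s, (s = 0 ∨ ∃ i, s = x i) ∧ s ≤ t ∧ Rset s x = Rset t x := by
  rcases (Rset t x).eq_empty_or_nonempty with h | h
  · exact ⟨0, Or.inl rfl, ht, Subset.antisymm (h ▸ Rset_mono ht x) (by simp [h])⟩
  · obtain ⟨i, hi, hmax⟩ := (Rset t x).exists_max_image x h
    exact ⟨x i, Or.inr ⟨i, rfl⟩, mem_Rset.1 hi, Subset.antisymm (Rset_mono (mem_Rset.1 hi) x)
      fun k hk => mem_Rset.2 (hmax k hk)⟩

noncomputable def countAbove (S : Finset (Fin m)) (lam : ℝ) (x : Fin m → ℝ) : ℕ :=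
  #{i ∈ S | lam < x i}

lemma countAbove_erase_congr (S : Finset (Fin m)) (hxy : ∀ i, i ≠ j → x i = y i) :
    countAbove (S.erase j) lam x = countAbove (S.erase j) lam y := by
  unfold countAbove
  congr 1
  exact filter_congr fun i hi => by rw [hxy i (ne_of_mem_erase hi)]

lemma countAbove_mono {S T : Finset (Fin m)} (h : S ⊆ T) (lam : ℝ) (x : Fin m → ℝ) :
    countAbove S lam x ≤ countAbove T lam x :=
  card_le_card (filter_subset_filter _ h)

lemma m0hat_eq_countAbove_erase (hx : x j ≤ lam) :
    m0hat lam x = (1 + countAbove (univ.erase j) lam x) / (1 - lam) := by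
  rw [m0hat, countAbove, filter_erase, erase_eq_of_notMem (by simpa using hx)]

lemma m0hat_pos (hlam : lam < 1) (x : Fin m → ℝ) : 0 < m0hat lam x :=
  div_pos (by positivity) (by linarith)

def storeyAdmissible (F : Finset (Fin m) → (Fin m → ℝ) → (Fin m → ℝ)) (lam q : ℝ)
    (x : Fin m → ℝ) : Set ℝ :=
  {t | (t = 0 ∨ ∃ i, t = x i) ∧ t ≤ lam ∧ FDPhatStorey F lam x t ≤ q}

lemma storeyAdmissible_finite : (storeyAdmissible F lam q x).Finite := by
  refine ((Set.finite_range x).insert 0).subset ?_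
  rintro t ⟨h | ⟨i, rfl⟩, -⟩
  exacts [Or.inl h, Or.inr ⟨i, rfl⟩]

lemma zero_mem_storeyAdmissible (hlam : 0 ≤ lam) (hq : 0 ≤ q) :
    0 ∈ storeyAdmissible F lam q x :=
  ⟨Or.inl rfl, hlam, by simpa [FDPhatStorey] using hq⟩

lemma tstarStorey_mem_storeyAdmissible (hlam : 0 ≤ lam) (hq : 0 ≤ q) (x : Fin m → ℝ) :
    tstarStorey F lam q x ∈ storeyAdmissible F lam q x :=
  Set.Nonempty.csSup_mem ⟨0, zero_mem_storeyAdmissible hlam hq⟩ storeyAdmissible_finite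

lemma le_tstarStorey {t : ℝ} (ht : t ∈ storeyAdmissible F lam q x) :
    t ≤ tstarStorey F lam q x :=
  le_csSup storeyAdmissible_finite.bddAbove ht

lemma tstarStorey_nonneg (hlam : 0 ≤ lam) (hq : 0 ≤ q) (x : Fin m → ℝ) :
    0 ≤ tstarStorey F lam q x :=
  le_tstarStorey (zero_mem_storeyAdmissible hlam hq)

lemma tstarStorey_eq_iSup (hlam : 0 ≤ lam) (hq : 0 ≤ q) (x : Fin m → ℝ) :
    tstarStorey F lam q x = ⨆ o : Option (Fin m), o.elim 0 fun i =>
      if x i ≤ lam ∧ FDPhatStorey F lam x (x i) ≤ q then x i else 0 := by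
  have hbdd := (Set.finite_range fun o : Option (Fin m) => o.elim 0 fun i =>
      if x i ≤ lam ∧ FDPhatStorey F lam x (x i) ≤ q then x i else 0).bddAbove
  apply le_antisymm
  · obtain ⟨h0 | ⟨i, hi⟩, hlam', hfdp⟩ :=
      tstarStorey_mem_storeyAdmissible (F := F) hlam hq x
    · exact h0 ▸ le_ciSup hbdd none
    · refine le_ciSup_of_le hbdd (some i) ?_
      simp only [Option.elim_some, ← hi, hlam', hfdp, and_self, if_true, le_refl]
  · refine ciSup_le fun o => ?_
    rcases o with _ | i
    · exact tstarStorey_nonneg hlam hq x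
    · dsimp only [Option.elim_some]
      split_ifs with h
      · exact le_tstarStorey ⟨Or.inr ⟨i, rfl⟩, h⟩
      · exact tstarStorey_nonneg hlam hq x

end Threshold

section LeaveOneOut

variable {m : ℕ} {F : Finset (Fin m) → (Fin m → ℝ) → (Fin m → ℝ)} {lam q : ℝ}
  {x y : Fin m → ℝ} {j : Fin m}

noncomputable def storeyOutput (F : Finset (Fin m) → (Fin m → ℝ) → (Fin m → ℝ))
    (lam q : ℝ) (x : Fin m → ℝ) : Fin m → ℝ :=
  F (Rset (tstarStorey F lam q x) x) x

lemma normU_nonneg (hF : IsFilter F) (R : Finset (Fin m)) (x : Fin m → ℝ) :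
    0 ≤ normU (F R x) :=
  sum_nonneg fun i _ => (hF R x i).2.1

lemma le_normU (hF : IsFilter F) (R : Finset (Fin m)) (x : Fin m → ℝ) (j : Fin m) :
    F R x j ≤ normU (F R x) :=
  single_le_sum (fun i _ => (hF R x i).2.1) (mem_univ j)

lemma le_tstarStorey_of_storeyOutput_pos (hF : IsFilter F)
    (h : 0 < storeyOutput F lam q x j) : x j ≤ tstarStorey F lam q x := by
  by_contra hj
  exact h.ne' ((hF _ x j).1 fun hmem => hj (mem_Rset.1 hmem))

lemma FDPhatStorey_le_of_Rset_eq (hF : IsFilter F) (hlam : lam < 1) {s t : ℝ} (hst : s ≤ t)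
    (h : Rset s x = Rset t x) : FDPhatStorey F lam x s ≤ FDPhatStorey F lam x t := by
  unfold FDPhatStorey
  rw [h]
  exact div_le_div_of_nonneg_right
    (mul_le_mul_of_nonneg_left hst (m0hat_pos hlam x).le) (normU_nonneg hF _ x)

lemma FDPhatStorey_eq_of_agree (hsimple : SimpleFilter F) (hxy : ∀ i, i ≠ j → x i = y i)
    (hwx : ∃ R, 0 < F R x j) (hwy : ∃ R, 0 < F R y j) {t : ℝ} (hx : x j ≤ t)
    (hy : y j ≤ t) (ht : t ≤ lam) : FDPhatStorey F lam x t = FDPhatStorey F lam y t := by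
  unfold FDPhatStorey
  rw [m0hat_eq_countAbove_erase (hx.trans ht), m0hat_eq_countAbove_erase (hy.trans ht),
    countAbove_erase_congr _ hxy, Rset_eq_of_agree hxy hx hy,
    hsimple j x y hxy hwx hwy _ (mem_Rset.2 hy)]

lemma normU_storeyOutput_eq_of_le (hF : IsFilter F) (hsimple : SimpleFilter F) (hlam : 0 ≤ lam)
    (hlam1 : lam < 1) (hq : 0 ≤ q) (hxy : ∀ i, i ≠ j → x i = y i)
    (hwx : ∃ R, 0 < F R x j) (hwy : ∃ R, 0 < F R y j) (hyx : y j ≤ x j)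
    (hx : x j ≤ tstarStorey F lam q x) :
    normU (storeyOutput F lam q y) = normU (storeyOutput F lam q x) := by
  set t := tstarStorey F lam q x
  set t' := tstarStorey F lam q y
  have hyx' : ∀ i, i ≠ j → y i = x i := fun i hi => (hxy i hi).symm
  obtain ⟨-, htlam, htq⟩ := tstarStorey_mem_storeyAdmissible (F := F) hlam hq x
  obtain ⟨ht'cand, ht'lam, ht'q⟩ := tstarStorey_mem_storeyAdmissible (F := F) hlam hq y
  have hyt : y j ≤ t := hyx.trans hx
  have ht't : t' ≤ t := by
    by_contra! h
    refine h.not_ge (le_tstarStorey ⟨?_, ht'lam, ?_⟩)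
    · rcases ht'cand with h0 | ⟨i, hi⟩
      · exact Or.inl h0
      · have hij : i ≠ j := by
          rintro rfl
          exact (hyt.trans_lt h).ne' hi
        exact Or.inr ⟨i, hi.trans (hyx' i hij)⟩
    · rwa [FDPhatStorey_eq_of_agree hsimple hxy hwx hwy (hx.trans h.le) (hyt.trans h.le) ht'lam]
  -- `t` itself need not be a candidate for `y` (it may equal `x j`), so lower it to one.
  obtain ⟨s, hscand, hst, hRs⟩ := exists_candidate_Rset_eq y (tstarStorey_nonneg hlam hq x)
  have hst' : s ≤ t' := le_tstarStorey ⟨hscand, hst.trans htlam, calc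
    FDPhatStorey F lam y s ≤ FDPhatStorey F lam y t := FDPhatStorey_le_of_Rset_eq hF hlam1 hst hRs
    _ = FDPhatStorey F lam x t := (FDPhatStorey_eq_of_agree hsimple hxy hwx hwy hx hyt htlam).symm
    _ ≤ q := htq⟩
  have hR : Rset t' y = Rset t x :=
    (Subset.antisymm (Rset_mono ht't y) (hRs ▸ Rset_mono hst' y)).trans
      (Rset_eq_of_agree hyx' hyt hx)
  rw [storeyOutput, storeyOutput, hR]
  exact hsimple j y x hyx' hwy hwx _ (mem_Rset.2 hx)

lemma normU_storeyOutput_eq_of_agree (hF : IsFilter F) (hsimple : SimpleFilter F)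
    (hlam : 0 ≤ lam) (hlam1 : lam < 1) (hq : 0 ≤ q) (hxy : ∀ i, i ≠ j → x i = y i)
    (hx : 0 < storeyOutput F lam q x j) (hy : 0 < storeyOutput F lam q y j) :
    normU (storeyOutput F lam q x) = normU (storeyOutput F lam q y) := by
  rcases le_total (y j) (x j) with hyx | hxy'
  · exact (normU_storeyOutput_eq_of_le hF hsimple hlam hlam1 hq hxy ⟨_, hx⟩ ⟨_, hy⟩ hyx
      (le_tstarStorey_of_storeyOutput_pos hF hx)).symm
  · exact normU_storeyOutput_eq_of_le hF hsimple hlam hlam1 hq (fun i hi => (hxy i hi).symm)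
      ⟨_, hy⟩ ⟨_, hx⟩ hxy' (le_tstarStorey_of_storeyOutput_pos hF hy)

lemma le_of_storeyOutput_pos (hF : IsFilter F) (hlam : 0 ≤ lam) (hlam1 : lam < 1) (hq : 0 ≤ q)
    (h : 0 < storeyOutput F lam q x j) :
    x j ≤ q * normU (storeyOutput F lam q x) * (1 - lam) /
      (1 + countAbove (univ.erase j) lam x) := by
  set C : ℝ := (countAbove (univ.erase j) lam x : ℝ)
  set V := normU (storeyOutput F lam q x)
  have hxt := le_tstarStorey_of_storeyOutput_pos hF h
  obtain ⟨-, htlam, htq⟩ := tstarStorey_mem_storeyAdmissible (F := F) hlam hq x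
  rw [FDPhatStorey, m0hat_eq_countAbove_erase (hxt.trans htlam)] at htq
  have hV : 0 < V := h.trans_le (le_normU hF _ x j)
  have hlam1' : 0 < 1 - lam := by linarith
  have hC : 0 < 1 + C := by positivity
  calc x j ≤ tstarStorey F lam q x := hxt
    _ = (1 + C) / (1 - lam) * tstarStorey F lam q x / V * (V * (1 - lam) / (1 + C)) := by
      field_simp
    _ ≤ q * (V * (1 - lam) / (1 + C)) := by gcongr; exact htq
    _ = q * V * (1 - lam) / (1 + C) := by ring

end LeaveOneOut

section ConditionalBound

variable {m : ℕ} {F : Finset (Fin m) → (Fin m → ℝ) → (Fin m → ℝ)} {lam q : ℝ}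

noncomputable def storeyShare (F : Finset (Fin m) → (Fin m → ℝ) → (Fin m → ℝ))
    (lam q : ℝ) (j : Fin m) (x : Fin m → ℝ) : ℝ :=
  storeyOutput F lam q x j / normU (storeyOutput F lam q x)

lemma genFDP_storeyOutput (H0 : Finset (Fin m)) (x : Fin m → ℝ) :
    genFDP H0 (storeyOutput F lam q x) = ∑ j ∈ H0, storeyShare F lam q j x := by
  simp only [genFDP, storeyShare, normU, sum_div]

lemma storeyShare_nonneg (hF : IsFilter F) (j : Fin m) (x : Fin m → ℝ) :
    0 ≤ storeyShare F lam q j x :=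
  div_nonneg (hF _ x j).2.1 (normU_nonneg hF _ x)

lemma storeyShare_eq_zero (hF : IsFilter F) {j : Fin m} {x : Fin m → ℝ}
    (h : ¬ 0 < storeyOutput F lam q x j) : storeyShare F lam q j x = 0 := by
  rw [storeyShare, le_antisymm (not_lt.1 h) (hF _ x j).2.1, zero_div]

lemma lintegral_storeyShare_update_le (hF : IsFilter F) (hsimple : SimpleFilter F)
    (hlam : 0 ≤ lam) (hlam1 : lam < 1) (hq : 0 ≤ q) (ν : Measure ℝ)
    (hν : ∀ c, 0 ≤ c → ν (Set.Iic c) ≤ ENNReal.ofReal c) (j : Fin m) (x : Fin m → ℝ) :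
    ∫⁻ s, ENNReal.ofReal (storeyShare F lam q j (update x j s)) ∂ν ≤
      ENNReal.ofReal (q * (1 - lam) / (1 + countAbove (univ.erase j) lam x)) := by
  have hagree : ∀ s s', ∀ i, i ≠ j → update x j s i = update x j s' i :=
    fun s s' i hi => by simp [hi]
  by_cases hsel : ∃ s₀, 0 < storeyOutput F lam q (update x j s₀) j
  swap
  · simp [storeyShare_eq_zero hF (not_exists.1 hsel _)]
  obtain ⟨s₀, hs₀⟩ := hsel
  set C : ℝ := (countAbove (univ.erase j) lam x : ℝ)
  set V := normU (storeyOutput F lam q (update x j s₀))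
  set c := q * V * (1 - lam) / (1 + C)
  have hV : 0 < V := hs₀.trans_le (le_normU hF _ _ j)
  have hC : 0 < 1 + C := by positivity
  have hc : 0 ≤ c := div_nonneg (mul_nonneg (mul_nonneg hq hV.le) (by linarith)) hC.le
  have hpt : ∀ s, ENNReal.ofReal (storeyShare F lam q j (update x j s)) ≤
      (Set.Iic c).indicator (fun _ => ENNReal.ofReal V⁻¹) s := by
    intro s
    by_cases hs : 0 < storeyOutput F lam q (update x j s) j
    · have hVs : normU (storeyOutput F lam q (update x j s)) = V :=
        normU_storeyOutput_eq_of_agree hF hsimple hlam hlam1 hq (hagree s s₀) hs hs₀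
      have hsc : s ≤ c := by
        have := le_of_storeyOutput_pos hF hlam hlam1 hq hs
        rwa [hVs, countAbove_erase_congr _ fun i hi => update_of_ne hi _ _,
          update_self] at this
      rw [Set.indicator_of_mem (Set.mem_Iic.2 hsc), storeyShare, hVs, div_eq_mul_inv]
      exact ENNReal.ofReal_le_ofReal (mul_le_of_le_one_left (inv_nonneg.2 hV.le) (hF _ _ j).2.2)
    · simp [storeyShare_eq_zero hF hs]
  calc ∫⁻ s, ENNReal.ofReal (storeyShare F lam q j (update x j s)) ∂ν
      ≤ ∫⁻ s, (Set.Iic c).indicator (fun _ => ENNReal.ofReal V⁻¹) s ∂ν :=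
        lintegral_mono hpt
    _ = ENNReal.ofReal V⁻¹ * ν (Set.Iic c) := lintegral_indicator_const measurableSet_Iic _
    _ ≤ ENNReal.ofReal V⁻¹ * ENNReal.ofReal c := by gcongr; exact hν c hc
    _ = ENNReal.ofReal (q * (1 - lam) / (1 + C)) := by
      rw [← ENNReal.ofReal_mul (inv_nonneg.2 hV.le)]
      congr 1
      simp only [c]
      field_simp

end ConditionalBound

section Measurability

variable {m : ℕ} {F : Finset (Fin m) → (Fin m → ℝ) → (Fin m → ℝ)} {lam q : ℝ}

lemma measurable_countAbove (S : Finset (Fin m)) (lam : ℝ) :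
    Measurable fun x : Fin m → ℝ => (countAbove S lam x : ℝ) := by
  simp only [countAbove, natCast_card_filter]
  exact Finset.measurable_sum _ fun i _ => Measurable.ite
    (measurableSet_lt measurable_const (measurable_pi_apply i)) measurable_const measurable_const

lemma measurable_m0hat (lam : ℝ) : Measurable (m0hat (m := m) lam) :=
  ((measurable_countAbove univ lam).const_add 1).div_const _

lemma measurable_normU
    (hFmeas : ∀ R j, Measurable fun x : Fin m → ℝ => F R x j) (R : Finset (Fin m)) :
    Measurable fun x => normU (F R x) :=
  Finset.measurable_sum _ fun j _ => hFmeas R j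

/-- There are finitely many rejection sets, each cut out by finitely many inequalities. -/
lemma Measurable.comp_Rset {e : (Fin m → ℝ) → ℝ} (he : Measurable e)
    {g : Finset (Fin m) → (Fin m → ℝ) → ℝ} (hg : ∀ R, Measurable (g R)) :
    Measurable fun x => g (Rset (e x) x) x := by
  have hR : ∀ R, MeasurableSet {x | Rset (e x) x = R} := by
    intro R
    have : {x | Rset (e x) x = R} = ⋂ i, {x | x i ≤ e x ↔ i ∈ R} := by
      ext x
      simp [Finset.ext_iff, mem_Rset]
    rw [this]
    refine MeasurableSet.iInter fun i => ?_
    by_cases hi : i ∈ R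
    · simpa [hi] using measurableSet_le (measurable_pi_apply i) he
    · simpa [hi] using measurableSet_lt he (measurable_pi_apply i)
  have : (fun x => g (Rset (e x) x) x) =
      fun x => ∑ R, if Rset (e x) x = R then g R x else 0 := by
    ext x
    simp
  rw [this]
  exact Finset.measurable_sum _ fun R _ => Measurable.ite (hR R) (hg R) measurable_const

lemma measurable_FDPhatStorey_apply
    (hFmeas : ∀ R j, Measurable fun x : Fin m → ℝ => F R x j) (i : Fin m) :
    Measurable fun x => FDPhatStorey F lam x (x i) :=
  ((measurable_m0hat lam).mul (measurable_pi_apply i)).div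
    ((measurable_pi_apply i).comp_Rset (measurable_normU hFmeas))

lemma measurable_tstarStorey (hFmeas : ∀ R j, Measurable fun x : Fin m → ℝ => F R x j)
    (hlam : 0 ≤ lam) (hq : 0 ≤ q) : Measurable (tstarStorey F lam q) := by
  rw [funext (tstarStorey_eq_iSup hlam hq)]
  refine Measurable.iSup fun o => ?_
  rcases o with _ | i
  · exact measurable_const
  · exact Measurable.ite ((measurableSet_le (measurable_pi_apply i) measurable_const).inter
      (measurableSet_le (measurable_FDPhatStorey_apply hFmeas i) measurable_const))
      (measurable_pi_apply i) measurable_const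

lemma measurable_storeyShare (hFmeas : ∀ R j, Measurable fun x : Fin m → ℝ => F R x j)
    (hlam : 0 ≤ lam) (hq : 0 ≤ q) (j : Fin m) : Measurable (storeyShare F lam q j) :=
  (measurable_tstarStorey hFmeas hlam hq).comp_Rset (g := fun R x => F R x j / normU (F R x))
    fun R => (hFmeas R j).div (measurable_normU hFmeas R)

end Measurability

section Probability

variable {Ω : Type*} [MeasurableSpace Ω] {μ : Measure Ω}

/-- Independence of `X j` from the remaining coordinates lets one resample `X j` from its
marginal law without changing the law of `X`. -/
lemma lintegral_eq_lintegral_lintegral_update {ι β : Type*} [DecidableEq ι] [MeasurableSpace β]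
    [IsFiniteMeasure μ] {X : Ω → ι → β} (hX : Measurable X) {j : ι}
    (hindep : IndepFun (fun ω => X ω j) (fun ω (i : {i // i ≠ j}) => X ω i) μ)
    {f : (ι → β) → ENNReal} (hf : Measurable f) :
    ∫⁻ ω, f (X ω) ∂μ =
      ∫⁻ ω, ∫⁻ s, f (update (X ω) j s) ∂(μ.map fun ω => X ω j) ∂μ := by
  set e := (Equiv.funSplitAt j β).symm
  set Y := fun ω (i : {i // i ≠ j}) => X ω i
  set ν := μ.map fun ω => X ω j
  have he : Measurable e := measurable_pi_lambda _ fun i => by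
    by_cases hi : i = j
    · subst hi
      simpa [e] using measurable_fst
    · simp only [e, Equiv.funSplitAt_symm_apply, dif_neg hi]
      exact (measurable_pi_apply _).comp measurable_snd
  have hXj : Measurable fun ω => X ω j := hX.eval
  have hY : Measurable Y := measurable_pi_lambda _ fun i => hX.eval
  have hsplit : ∀ ω s, e (s, Y ω) = update (X ω) j s := by
    intro ω s
    ext i
    by_cases hi : i = j
    · subst hi
      simp [e]
    · simp [e, Y, hi]
  calc ∫⁻ ω, f (X ω) ∂μ
      = ∫⁻ z, f (e z) ∂(μ.map fun ω => (X ω j, Y ω)) := by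
        rw [lintegral_map (f := fun z => f (e z)) (hf.comp he) (hXj.prodMk hY)]
        simp only [hsplit, update_eq_self]
    _ = ∫⁻ z, f (e z) ∂(ν.prod (μ.map Y)) := by
        rw [hindep.map_prod_eq_prod_map_map hXj.aemeasurable hY.aemeasurable]
    _ = ∫⁻ y, ∫⁻ s, f (e (s, y)) ∂ν ∂(μ.map Y) := lintegral_prod_symm' _ (hf.comp he)
    _ = _ := by
        rw [lintegral_map (f := fun y => ∫⁻ s, f (e (s, y)) ∂ν)
          (hf.comp he).lintegral_prod_left' hY]
        simp only [hsplit]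

lemma Superuniform.map_Iic_le [IsProbabilityMeasure μ] {m : ℕ} {p : Ω → Fin m → ℝ}
    {H0 : Finset (Fin m)} (h : Superuniform μ p H0) (hp : Measurable p) {j : Fin m}
    (hj : j ∈ H0) {c : ℝ} (hc : 0 ≤ c) :
    μ.map (fun ω => p ω j) (Set.Iic c) ≤ ENNReal.ofReal c := by
  rw [Measure.map_apply hp.eval measurableSet_Iic]
  rcases le_total c 1 with hc1 | hc1
  · exact h j hj c ⟨hc, hc1⟩
  · exact prob_le_one.trans (ENNReal.one_le_ofReal.2 hc1)

variable {m : ℕ} {F : Finset (Fin m) → (Fin m → ℝ) → (Fin m → ℝ)} {lam q : ℝ}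

noncomputable def storeyBound (H0 : Finset (Fin m)) (lam q : ℝ) (j : Fin m)
    (x : Fin m → ℝ) : ℝ :=
  if lam < x j then q / (1 + countAbove (H0.erase j) lam x) else 0

lemma measurable_storeyBound (H0 : Finset (Fin m)) (lam q : ℝ) (j : Fin m) :
    Measurable (storeyBound H0 lam q j) :=
  Measurable.ite (measurableSet_lt measurable_const (measurable_pi_apply j))
    (measurable_const.div ((measurable_countAbove _ lam).const_add 1)) measurable_const

lemma storeyBound_nonneg {H0 : Finset (Fin m)} (hq : 0 ≤ q) (j : Fin m) (x : Fin m → ℝ) :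
    0 ≤ storeyBound H0 lam q j x := by
  unfold storeyBound
  split_ifs <;> positivity

/-- Among the `N` nulls above `λ`, each contributes `q / N`. -/
lemma sum_storeyBound_le (hq : 0 ≤ q) (H0 : Finset (Fin m)) (x : Fin m → ℝ) :
    ∑ j ∈ H0, storeyBound H0 lam q j x ≤ q := by
  set S := {i ∈ H0 | lam < x i}
  have hcard : ∀ j ∈ S, (1 + countAbove (H0.erase j) lam x : ℝ) = #S := by
    intro j hj
    rw [countAbove, filter_erase, card_erase_of_mem hj, Nat.cast_sub (card_pos.2 ⟨j, hj⟩)]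
    push_cast
    ring
  calc ∑ j ∈ H0, storeyBound H0 lam q j x = ∑ j ∈ H0, if lam < x j then q / #S else 0 :=
        sum_congr rfl fun j hj => by
          unfold storeyBound
          split_ifs with h
          · rw [hcard j (mem_filter.2 ⟨hj, h⟩)]
          · rfl
    _ = #S * (q / #S) := by rw [← sum_filter, sum_const, nsmul_eq_mul]
    _ ≤ q := by
        rcases eq_or_ne (#S : ℝ) 0 with h | h
        · simp [h, hq]
        · rw [mul_div_cancel₀ _ h]

lemma lintegral_storeyShare_le [IsProbabilityMeasure μ] {H0 : Finset (Fin m)}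
    {p : Ω → Fin m → ℝ} (hp : Measurable p) (hsuper : Superuniform μ p H0) {j : Fin m}
    (hj : j ∈ H0) (hindep : IndepFun (fun ω => p ω j)
      (fun ω (i : {i : Fin m // i ≠ j}) => p ω i) μ)
    (hF : IsFilter F) (hFmeas : ∀ R j, Measurable fun x : Fin m → ℝ => F R x j)
    (hsimple : SimpleFilter F) (hlam : 0 ≤ lam) (hlam1 : lam < 1) (hq : 0 ≤ q) :
    ∫⁻ ω, ENNReal.ofReal (storeyShare F lam q j (p ω)) ∂μ ≤
      ∫⁻ ω, ENNReal.ofReal (storeyBound H0 lam q j (p ω)) ∂μ := by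
  set ν := μ.map fun ω => p ω j
  have : IsProbabilityMeasure ν :=
    Measure.isProbabilityMeasure_map hp.eval.aemeasurable
  have hν : ∀ c, 0 ≤ c → ν (Set.Iic c) ≤ ENNReal.ofReal c :=
    fun c hc => hsuper.map_Iic_le hp hj hc
  have hνlam : ENNReal.ofReal (1 - lam) ≤ ν (Set.Ioi lam) := by
    rw [← Set.compl_Iic, prob_compl_eq_one_sub measurableSet_Iic, ENNReal.ofReal_sub _ hlam,
      ENNReal.ofReal_one]
    exact tsub_le_tsub_left (hν lam hlam) 1
  have hresample : ∀ x : Fin m → ℝ,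
      ∫⁻ s, ENNReal.ofReal (storeyBound H0 lam q j (update x j s)) ∂ν =
        ENNReal.ofReal (q / (1 + countAbove (H0.erase j) lam x)) * ν (Set.Ioi lam) := by
    intro x
    rw [← lintegral_indicator_const (μ := ν) measurableSet_Ioi]
    refine lintegral_congr fun s => ?_
    by_cases hs : lam < s
    · rw [Set.indicator_of_mem (Set.mem_Ioi.2 hs), storeyBound, update_self, if_pos hs,
        countAbove_erase_congr H0 fun i hi => update_of_ne hi s x]
    · simp [storeyBound, hs]
  calc ∫⁻ ω, ENNReal.ofReal (storeyShare F lam q j (p ω)) ∂μ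
      = ∫⁻ ω, ∫⁻ s, ENNReal.ofReal (storeyShare F lam q j (update (p ω) j s)) ∂ν
          ∂μ :=
        lintegral_eq_lintegral_lintegral_update hp hindep
          (measurable_storeyShare hFmeas hlam hq j).ennreal_ofReal
    _ ≤ ∫⁻ ω, ENNReal.ofReal (q * (1 - lam) / (1 + countAbove (univ.erase j) lam (p ω)))
          ∂μ :=
        lintegral_mono fun ω =>
          lintegral_storeyShare_update_le hF hsimple hlam hlam1 hq ν hν j (p ω)
    _ ≤ ∫⁻ ω, ENNReal.ofReal (q / (1 + countAbove (H0.erase j) lam (p ω))) *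
          ν (Set.Ioi lam) ∂μ := by
        refine lintegral_mono fun ω => le_trans (b := ENNReal.ofReal
          (q / (1 + countAbove (H0.erase j) lam (p ω))) * ENNReal.ofReal (1 - lam)) ?_ (by gcongr)
        rw [← ENNReal.ofReal_mul (by positivity), mul_div_right_comm]
        have := countAbove_mono (erase_subset_erase j (subset_univ H0)) lam (p ω)
        gcongr
    _ = ∫⁻ ω, ∫⁻ s, ENNReal.ofReal (storeyBound H0 lam q j (update (p ω) j s)) ∂ν
          ∂μ := by
        simp only [hresample]
    _ = ∫⁻ ω, ENNReal.ofReal (storeyBound H0 lam q j (p ω)) ∂μ :=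
        (lintegral_eq_lintegral_lintegral_update hp hindep
          (measurable_storeyBound H0 lam q j).ennreal_ofReal).symm

lemma lintegral_sum_storeyShare_le [IsProbabilityMeasure μ] {H0 : Finset (Fin m)}
    {p : Ω → Fin m → ℝ} (hp : Measurable p) (hsuper : Superuniform μ p H0)
    (hindep : ∀ j ∈ H0, IndepFun (fun ω => p ω j)
      (fun ω (i : {i : Fin m // i ≠ j}) => p ω i) μ)
    (hF : IsFilter F) (hFmeas : ∀ R j, Measurable fun x : Fin m → ℝ => F R x j)
    (hsimple : SimpleFilter F) (hlam : 0 ≤ lam) (hlam1 : lam < 1) (hq : 0 ≤ q) :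
    ∫⁻ ω, ENNReal.ofReal (∑ j ∈ H0, storeyShare F lam q j (p ω)) ∂μ ≤ ENNReal.ofReal q := by
  have hshare (j : Fin m) : Measurable fun ω => storeyShare F lam q j (p ω) :=
    (measurable_storeyShare hFmeas hlam hq j).comp hp
  have hbound (j : Fin m) : Measurable fun ω => storeyBound H0 lam q j (p ω) :=
    (measurable_storeyBound H0 lam q j).comp hp
  calc ∫⁻ ω, ENNReal.ofReal (∑ j ∈ H0, storeyShare F lam q j (p ω)) ∂μ
      = ∑ j ∈ H0, ∫⁻ ω, ENNReal.ofReal (storeyShare F lam q j (p ω)) ∂μ := by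
        simp_rw [ENNReal.ofReal_sum_of_nonneg fun j _ => storeyShare_nonneg hF j _]
        exact lintegral_finsetSum _ fun j _ => (hshare j).ennreal_ofReal
    _ ≤ ∑ j ∈ H0, ∫⁻ ω, ENNReal.ofReal (storeyBound H0 lam q j (p ω)) ∂μ :=
        sum_le_sum fun j hj => lintegral_storeyShare_le hp hsuper hj (hindep j hj) hF hFmeas
          hsimple hlam hlam1 hq
    _ = ∫⁻ ω, ∑ j ∈ H0, ENNReal.ofReal (storeyBound H0 lam q j (p ω)) ∂μ :=
        (lintegral_finsetSum _ fun j _ => (hbound j).ennreal_ofReal).symm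
    _ ≤ ∫⁻ _, ENNReal.ofReal q ∂μ := lintegral_mono fun ω => by
        rw [← ENNReal.ofReal_sum_of_nonneg fun j _ => storeyBound_nonneg hq j (p ω)]
        exact ENNReal.ofReal_le_ofReal (sum_storeyBound_le hq H0 (p ω))
    _ = ENNReal.ofReal q := by simp

end Probability

theorem focusedStoreyBH_FDR_control_of_indep_of_simple_general
    {Ω : Type*} [MeasurableSpace Ω] (μ : Measure Ω) [IsProbabilityMeasure μ]
    {m : ℕ} (H0 : Finset (Fin m)) (p : Ω → Fin m → ℝ)
    (hpmeas : Measurable p)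
    (hsuper : Superuniform μ p H0)
    (hindep : ∀ j ∈ H0, ProbabilityTheory.IndepFun
      (fun ω => p ω j) (fun ω => (fun i : {i : Fin m // i ≠ j} => p ω i)) μ)
    (F : Finset (Fin m) → (Fin m → ℝ) → (Fin m → ℝ))
    (hF : IsFilter F)
    (hFmeas : ∀ (R : Finset (Fin m)) (j : Fin m), Measurable (fun x : Fin m → ℝ => F R x j))
    (hsimple : SimpleFilter F)
    (lam : ℝ) (hlam : lam ∈ Set.Ioo (0 : ℝ) 1)
    (q : ℝ) (hq : q ∈ Set.Ioo (0 : ℝ) 1) :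
    ∫ ω, genFDP H0 (F (Rset (tstarStorey F lam q (p ω)) (p ω)) (p ω)) ∂μ ≤ q := by
  obtain ⟨hlam0, hlam1⟩ := hlam
  have hq0 := hq.1.le
  change ∫ ω, genFDP H0 (storeyOutput F lam q (p ω)) ∂μ ≤ q
  simp_rw [genFDP_storeyOutput]
  rw [integral_eq_lintegral_of_nonneg_ae
    (ae_of_all _ fun ω => sum_nonneg fun j _ => storeyShare_nonneg hF j (p ω))
    (Finset.measurable_sum _ fun j _ =>
      (measurable_storeyShare hFmeas hlam0.le hq0 j).comp hpmeas).aestronglyMeasurable]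
  exact ENNReal.toReal_le_of_le_ofReal hq0 (lintegral_sum_storeyShare_le hpmeas hsuper hindep
    hF hFmeas hsimple hlam0.le hlam1 hq0)

/-- **Focused Storey BH under independence (Theorem 1(ii), Storey part).**
Fix `λ ∈ (0,1)`. If the null p-values are superuniform, each null `p_j` is independent of the
remaining coordinates, and the filter is simple, then Focused Storey BH at level `q` controls
the generalized FDR: `E[FDP(U*)] ≤ q` where `U* = F(R(t*,p), p)`. -/
theorem focusedStoreyBH_FDR_control_of_indep_of_simple
    {Ω : Type*} [MeasurableSpace Ω] (μ : Measure Ω) [IsProbabilityMeasure μ]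
    {m : ℕ} (H0 : Finset (Fin m)) (p : Ω → Fin m → ℝ)
    (hpmeas : Measurable p)
    (hp01 : ∀ ω i, p ω i ∈ Set.Icc (0 : ℝ) 1)
    (hsuper : Superuniform μ p H0)
    (hindep : ∀ j ∈ H0, ProbabilityTheory.IndepFun
      (fun ω => p ω j) (fun ω => (fun i : {i : Fin m // i ≠ j} => p ω i)) μ)
    (F : Finset (Fin m) → (Fin m → ℝ) → (Fin m → ℝ))
    (hF : IsFilter F)
    (hFmeas : ∀ (R : Finset (Fin m)) (j : Fin m), Measurable (fun x : Fin m → ℝ => F R x j))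
    (hsimple : SimpleFilter F)
    (lam : ℝ) (hlam : lam ∈ Set.Ioo (0 : ℝ) 1)
    (q : ℝ) (hq : q ∈ Set.Ioo (0 : ℝ) 1) :
    ∫ ω, genFDP H0 (F (Rset (tstarStorey F lam q (p ω)) (p ω)) (p ω)) ∂μ ≤ q :=
  focusedStoreyBH_FDR_control_of_indep_of_simple_general μ H0 p hpmeas hsuper hindep F hF hFmeas
    hsimple lam hlam q hq
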